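/- Under Assumption ε-small with εn < 2 (n = |W|), the best revenue-ordered set is nearly optimal for BundleMVL-2: if C*_revord maximizes R₂ over the revenue-ordered sets A_1 ⊆ A_2 ⊆ ⋯ ⊆ A_n (with products sorted in decreasing revenue) and C* maximizes R₂ over all subsets, then R₂(C*_revord) ≥ ((2 − εn)/(2 + 4εn))·R₂(C*). -/
import Mathlib
open Finset

private lemma swap_sum (C : Finset ℕ) (g : ℕ → ℝ) :
    ∑ i ∈ C, ∑ j ∈ C.filter (fun j => i < j), g j
      = ∑ j ∈ C, ((C.filter (fun i => i < j)).card : ℝ) * g j := by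
  have h : ∀ i ∈ C, ∑ j ∈ C.filter (fun j => i < j), g j
      = ∑ j ∈ C, if i < j then g j else 0 := by
    intro i _; rw [Finset.sum_filter]
  rw [Finset.sum_congr rfl h, Finset.sum_comm]
  refine Finset.sum_congr rfl fun j _ => ?_
  rw [← Finset.sum_filter, Finset.sum_const, nsmul_eq_mul]

private lemma pair_sum_bound (n : ℕ) (C : Finset ℕ) (hC : C ⊆ Finset.Icc 1 n)
    (f : ℕ → ℝ) (hf : ∀ i ∈ C, 0 ≤ f i) :
    ∑ i ∈ C, ∑ j ∈ C.filter (fun j => i < j), (f i + f j) ≤ n * ∑ i ∈ C, f i := by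
  have key : ∑ i ∈ C, ∑ j ∈ C.filter (fun j => i < j), (f i + f j)
      = ∑ i ∈ C, (((C.filter (fun j => i < j)).card : ℝ)
          + ((C.filter (fun j => j < i)).card : ℝ)) * f i := by
    simp only [Finset.sum_add_distrib]
    rw [swap_sum]
    rw [← Finset.sum_add_distrib]
    refine Finset.sum_congr rfl fun i _ => ?_
    rw [Finset.sum_const, nsmul_eq_mul]
    ring
  rw [key, Finset.mul_sum]
  refine Finset.sum_le_sum fun i hi => ?_
  have hi' := hC hi
  simp only [Finset.mem_Icc] at hi'
  have h1 : (C.filter (fun j => i < j)).card ≤ n - i := by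
    have : C.filter (fun j => i < j) ⊆ Finset.Icc (i+1) n := by
      intro j hj
      simp only [Finset.mem_filter] at hj
      have := hC hj.1
      simp only [Finset.mem_Icc] at this ⊢
      omega
    calc _ ≤ (Finset.Icc (i+1) n).card := Finset.card_le_card this
      _ = n - i := by rw [Nat.card_Icc]; omega
  have h2 : (C.filter (fun j => j < i)).card ≤ i - 1 := by
    have : C.filter (fun j => j < i) ⊆ Finset.Icc 1 (i-1) := by
      intro j hj
      simp only [Finset.mem_filter] at hj
      have := hC hj.1
      simp only [Finset.mem_Icc] at this ⊢
      omega
    calc _ ≤ (Finset.Icc 1 (i-1)).card := Finset.card_le_card this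
      _ = i - 1 := by rw [Nat.card_Icc]; omega
  have hsum : (C.filter (fun j => i < j)).card + (C.filter (fun j => j < i)).card ≤ n := by omega
  have : (((C.filter (fun j => i < j)).card : ℝ) + ((C.filter (fun j => j < i)).card : ℝ)) ≤ n := by
    exact_mod_cast hsum
  exact mul_le_mul_of_nonneg_right this (hf i hi)

section helpers
variable {n : ℕ} {r V1 : ℕ → ℝ} {v0 : ℝ}

private lemma S1_nonneg (hr : ∀ i ∈ Finset.Icc 1 n, 0 < r i)
    (hV1 : ∀ i ∈ Finset.Icc 1 n, 0 < V1 i) {C : Finset ℕ} (hC : C ⊆ Finset.Icc 1 n) :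
    0 ≤ ∑ i ∈ C, V1 i * r i :=
  Finset.sum_nonneg fun i hi => mul_nonneg (hV1 i (hC hi)).le (hr i (hC hi)).le

private lemma D_pos (hv0 : 0 < v0)
    (hV1 : ∀ i ∈ Finset.Icc 1 n, 0 < V1 i) {C : Finset ℕ} (hC : C ⊆ Finset.Icc 1 n) :
    0 < v0 + ∑ i ∈ C, V1 i := by
  have : 0 ≤ ∑ i ∈ C, V1 i := Finset.sum_nonneg fun i hi => (hV1 i (hC hi)).le
  linarith

/-- Best prefix beats any set for the MNL objective. -/
private lemma mnl_prefix (hn : 1 ≤ n) (hv0 : 0 < v0)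
    (hr : ∀ i ∈ Finset.Icc 1 n, 0 < r i)
    (hsort : ∀ i j, 1 ≤ i → i ≤ j → j ≤ n → r j ≤ r i)
    (hV1 : ∀ i ∈ Finset.Icc 1 n, 0 < V1 i)
    {C : Finset ℕ} (hC : C ⊆ Finset.Icc 1 n) :
    ∃ m, 1 ≤ m ∧ m ≤ n ∧
      (∑ i ∈ C, V1 i * r i) / (v0 + ∑ i ∈ C, V1 i) ≤
      (∑ i ∈ Finset.Icc 1 m, V1 i * r i) / (v0 + ∑ i ∈ Finset.Icc 1 m, V1 i) := by
  set Z : ℝ := (∑ i ∈ C, V1 i * r i) / (v0 + ∑ i ∈ C, V1 i) with hZ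
  have hDC : 0 < v0 + ∑ i ∈ C, V1 i := D_pos hv0 hV1 hC
  have hZnn : 0 ≤ Z := div_nonneg (S1_nonneg hr hV1 hC) hDC.le
  have h1n : (1 : ℕ) ∈ Finset.Icc 1 n := by simp [hn]
  have hr1 : 0 < r 1 := hr 1 h1n
  have hZle : Z ≤ r 1 := by
    rw [hZ, div_le_iff₀ hDC]
    have h1 : ∑ i ∈ C, V1 i * r i ≤ ∑ i ∈ C, V1 i * r 1 := by
      refine Finset.sum_le_sum fun i hi => ?_
      have hi' := hC hi
      simp only [Finset.mem_Icc] at hi'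
      exact mul_le_mul_of_nonneg_left (hsort 1 i le_rfl hi'.1 hi'.2) (hV1 i (hC hi)).le
    have h2 : ∑ i ∈ C, V1 i * r 1 = (∑ i ∈ C, V1 i) * r 1 := by
      rw [Finset.sum_mul]
    nlinarith [Finset.sum_nonneg (fun i hi => (hV1 i (hC hi)).le : ∀ i ∈ C, 0 ≤ V1 i)]
  set A : Finset ℕ := (Finset.Icc 1 n).filter (fun i => Z ≤ r i) with hA
  have h1A : 1 ∈ A := by
    rw [hA, Finset.mem_filter]; exact ⟨h1n, hZle⟩
  have hAne : A.Nonempty := ⟨1, h1A⟩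
  set m : ℕ := A.max' hAne with hm
  have hmA : m ∈ A := A.max'_mem hAne
  have hmfacts : 1 ≤ m ∧ m ≤ n ∧ Z ≤ r m := by
    rw [hA, Finset.mem_filter, Finset.mem_Icc] at hmA
    exact ⟨hmA.1.1, hmA.1.2, hmA.2⟩
  have hAeq : A = Finset.Icc 1 m := by
    ext i
    simp only [hA, Finset.mem_filter, Finset.mem_Icc]
    constructor
    · rintro ⟨⟨hi1, hi2⟩, hi3⟩
      exact ⟨hi1, Finset.le_max' A i (by rw [hA, Finset.mem_filter, Finset.mem_Icc]; exact ⟨⟨hi1, hi2⟩, hi3⟩)⟩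
    · rintro ⟨hi1, hi2⟩
      refine ⟨⟨hi1, hi2.trans hmfacts.2.1⟩, hmfacts.2.2.trans (hsort i m hi1 hi2 hmfacts.2.1)⟩
  have hkey : ∑ i ∈ C, V1 i * (r i - Z) ≤ ∑ i ∈ A, V1 i * (r i - Z) := by
    have hsplit : ∑ i ∈ C ∩ A, V1 i * (r i - Z) + ∑ i ∈ C \ A, V1 i * (r i - Z)
        = ∑ i ∈ C, V1 i * (r i - Z) := Finset.sum_inter_add_sum_sdiff C A _
    have h2 : ∑ i ∈ C \ A, V1 i * (r i - Z) ≤ 0 := by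
      refine Finset.sum_nonpos fun i hi => ?_
      rw [Finset.mem_sdiff] at hi
      have hiI := hC hi.1
      have : ¬ Z ≤ r i := by
        intro h; exact hi.2 (by rw [hA, Finset.mem_filter]; exact ⟨hiI, h⟩)
      exact mul_nonpos_of_nonneg_of_nonpos (hV1 i hiI).le (by linarith)
    have h3 : ∑ i ∈ C ∩ A, V1 i * (r i - Z) ≤ ∑ i ∈ A, V1 i * (r i - Z) := by
      refine Finset.sum_le_sum_of_subset_of_nonneg Finset.inter_subset_right fun i hi _ => ?_
      rw [hA, Finset.mem_filter] at hi
      exact mul_nonneg (hV1 i hi.1).le (by linarith [hi.2])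
    linarith
  have hid : ∑ i ∈ C, V1 i * r i = Z * (v0 + ∑ i ∈ C, V1 i) := by
    rw [hZ, div_mul_cancel₀ _ hDC.ne']
  have hexp : ∀ D : Finset ℕ, ∑ i ∈ D, V1 i * (r i - Z)
      = (∑ i ∈ D, V1 i * r i) - Z * ∑ i ∈ D, V1 i := by
    intro D
    rw [Finset.mul_sum, ← Finset.sum_sub_distrib]
    refine Finset.sum_congr rfl fun i _ => by ring
  rw [hexp, hexp] at hkey
  have hfin : Z * (v0 + ∑ i ∈ A, V1 i) ≤ ∑ i ∈ A, V1 i * r i := by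
    nlinarith
  refine ⟨m, hmfacts.1, hmfacts.2.1, ?_⟩
  rw [← hAeq, le_div_iff₀ (D_pos hv0 hV1 (by rw [hAeq]; intro i hi; simp only [Finset.mem_Icc] at hi ⊢; omega))]
  exact hfin
end helpers

/-- Under the ε-small assumption with εn < 2, the best revenue-ordered set is nearly optimal
for BundleMVL-2: R₂(C*_revord) ≥ ((2 − εn)/(2 + 4εn))·R₂(C*). -/
theorem revenue_ordered_near_optimal (n : ℕ) (r V1 : ℕ → ℝ) (V2 : ℕ → ℕ → ℝ) (v0 ε : ℝ)
    (hv0 : 0 < v0) (hε : 0 < ε)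
    (hr : ∀ i ∈ Finset.Icc 1 n, 0 < r i)
    (hsort : ∀ i j, 1 ≤ i → i ≤ j → j ≤ n → r j ≤ r i)
    (hV1 : ∀ i ∈ Finset.Icc 1 n, 0 < V1 i)
    (hV2nn : ∀ i j, 0 ≤ V2 i j)
    (hV2symm : ∀ i j, V2 i j = V2 j i)
    (hsmall : ∀ i ∈ Finset.Icc 1 n, ∀ j ∈ Finset.Icc 1 n, i ≠ j →
      V2 i j ≤ ε * v0 ∧ ∀ k ∈ Finset.Icc 1 n, V2 i j ≤ ε * V1 k)
    (R2 : Finset ℕ → ℝ)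
    (hR2 : ∀ C, R2 C =
      ((∑ i ∈ C, V1 i * r i) + ∑ i ∈ C, ∑ j ∈ C.filter (fun j => i < j), V2 i j * (r i + r j)) /
      (v0 + (∑ i ∈ C, V1 i) + ∑ i ∈ C, ∑ j ∈ C.filter (fun j => i < j), V2 i j))
    (Crev : Finset ℕ) (hCrev : ∃ m, 1 ≤ m ∧ m ≤ n ∧ Crev = Finset.Icc 1 m)
    (hCrevmax : ∀ m, 1 ≤ m → m ≤ n → R2 (Finset.Icc 1 m) ≤ R2 Crev)
    (Cs : Finset ℕ) (hCs : Cs ⊆ Finset.Icc 1 n)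
    (hCsmax : ∀ C ⊆ Finset.Icc 1 n, R2 C ≤ R2 Cs)
    (hεn : ε * n < 2) :
    R2 Crev ≥ ((2 - ε * n) / (2 + 4 * ε * n)) * R2 Cs := by
  obtain ⟨m0, hm01, hm0n, _⟩ := hCrev
  have hn : 1 ≤ n := hm01.trans hm0n
  set x : ℝ := ε * n with hx
  have hxnn : 0 ≤ x := by positivity
  -- basic facts
  have hSVnn : ∀ C ⊆ Finset.Icc 1 n, (0:ℝ) ≤ ∑ i ∈ C, V1 i := fun C hC =>
    Finset.sum_nonneg fun i hi => (hV1 i (hC hi)).le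
  have hDpos : ∀ C ⊆ Finset.Icc 1 n, (0:ℝ) < v0 + ∑ i ∈ C, V1 i := fun C hC => by
    have := hSVnn C hC; linarith
  have hS1nn : ∀ C ⊆ Finset.Icc 1 n, (0:ℝ) ≤ ∑ i ∈ C, V1 i * r i := fun C hC =>
    Finset.sum_nonneg fun i hi => mul_nonneg (hV1 i (hC hi)).le (hr i (hC hi)).le
  have hPnn : ∀ C : Finset ℕ, C ⊆ Finset.Icc 1 n →
      (0:ℝ) ≤ ∑ i ∈ C, ∑ j ∈ C.filter (fun j => i < j), V2 i j * (r i + r j) := by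
    intro C hC
    refine Finset.sum_nonneg fun i hi => Finset.sum_nonneg fun j hj => ?_
    rw [Finset.mem_filter] at hj
    exact mul_nonneg (hV2nn i j) (by linarith [hr i (hC hi), hr j (hC hj.1)])
  have hQnn : ∀ C : Finset ℕ,
      (0:ℝ) ≤ ∑ i ∈ C, ∑ j ∈ C.filter (fun j => i < j), V2 i j := fun C =>
    Finset.sum_nonneg fun i _ => Finset.sum_nonneg fun j _ => hV2nn i j
  -- pair-sum bounds
  have hPle : ∀ C ⊆ Finset.Icc 1 n,
      ∑ i ∈ C, ∑ j ∈ C.filter (fun j => i < j), V2 i j * (r i + r j)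
        ≤ x * ∑ i ∈ C, V1 i * r i := by
    intro C hC
    calc ∑ i ∈ C, ∑ j ∈ C.filter (fun j => i < j), V2 i j * (r i + r j)
        ≤ ∑ i ∈ C, ∑ j ∈ C.filter (fun j => i < j),
            (ε * (V1 i * r i) + ε * (V1 j * r j)) := by
          refine Finset.sum_le_sum fun i hi => Finset.sum_le_sum fun j hj => ?_
          rw [Finset.mem_filter] at hj
          have hiI := hC hi
          have hjI := hC hj.1
          have hne : i ≠ j := Nat.ne_of_lt hj.2
          obtain ⟨_, hk⟩ := hsmall i hiI j hjI hne
          have h1 : V2 i j ≤ ε * V1 i := hk i hiI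
          have h2 : V2 i j ≤ ε * V1 j := hk j hjI
          have hri := hr i hiI
          have hrj := hr j hjI
          nlinarith [hV2nn i j]
      _ ≤ n * ∑ i ∈ C, ε * (V1 i * r i) := by
          refine pair_sum_bound n C hC _ fun i hi => ?_
          exact mul_nonneg hε.le (mul_nonneg (hV1 i (hC hi)).le (hr i (hC hi)).le)
      _ = x * ∑ i ∈ C, V1 i * r i := by rw [← Finset.mul_sum, hx]; ring
  have hQle : ∀ C ⊆ Finset.Icc 1 n,
      ∑ i ∈ C, ∑ j ∈ C.filter (fun j => i < j), V2 i j
        ≤ x / 2 * (v0 + ∑ i ∈ C, V1 i) := by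
    intro C hC
    have step : ∑ i ∈ C, ∑ j ∈ C.filter (fun j => i < j), V2 i j
        ≤ n * ∑ i ∈ C, ε / 2 * V1 i := by
      calc ∑ i ∈ C, ∑ j ∈ C.filter (fun j => i < j), V2 i j
          ≤ ∑ i ∈ C, ∑ j ∈ C.filter (fun j => i < j), (ε / 2 * V1 i + ε / 2 * V1 j) := by
            refine Finset.sum_le_sum fun i hi => Finset.sum_le_sum fun j hj => ?_
            rw [Finset.mem_filter] at hj
            have hiI := hC hi
            have hjI := hC hj.1
            obtain ⟨_, hk⟩ := hsmall i hiI j hjI (Nat.ne_of_lt hj.2)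
            linarith [hk i hiI, hk j hjI]
        _ ≤ n * ∑ i ∈ C, ε / 2 * V1 i := by
            refine pair_sum_bound n C hC _ fun i hi => ?_
            exact mul_nonneg (by linarith) (hV1 i (hC hi)).le
    have h2 : (n:ℝ) * ∑ i ∈ C, ε / 2 * V1 i = x / 2 * ∑ i ∈ C, V1 i := by
      rw [← Finset.mul_sum, hx]; ring
    have h3 : x / 2 * ∑ i ∈ C, V1 i ≤ x / 2 * (v0 + ∑ i ∈ C, V1 i) := by
      have := hSVnn C hC; nlinarith
    linarith [step, h2.symm.le]
  -- sandwich bounds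
  have lower : ∀ C ⊆ Finset.Icc 1 n,
      (∑ i ∈ C, V1 i * r i) / (v0 + ∑ i ∈ C, V1 i) ≤ (1 + x / 2) * R2 C := by
    intro C hC
    rw [hR2]
    have hD := hDpos C hC
    have hQ := hQnn C
    have hDQ : 0 < v0 + (∑ i ∈ C, V1 i) + ∑ i ∈ C, ∑ j ∈ C.filter (fun j => i < j), V2 i j := by
      linarith
    have h1 := hQle C hC
    have h2 := hPnn C hC
    have h3 := hS1nn C hC
    calc (∑ i ∈ C, V1 i * r i) / (v0 + ∑ i ∈ C, V1 i)
        ≤ ((1 + x / 2) * ((∑ i ∈ C, V1 i * r i)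
              + ∑ i ∈ C, ∑ j ∈ C.filter (fun j => i < j), V2 i j * (r i + r j))) /
            (v0 + (∑ i ∈ C, V1 i) + ∑ i ∈ C, ∑ j ∈ C.filter (fun j => i < j), V2 i j) := by
          rw [div_le_div_iff₀ hD hDQ]
          nlinarith [mul_le_mul_of_nonneg_left h1 h3, mul_nonneg h2 hD.le,
            mul_nonneg (mul_nonneg hxnn h2) hD.le]
      _ = (1 + x / 2) * (((∑ i ∈ C, V1 i * r i)
              + ∑ i ∈ C, ∑ j ∈ C.filter (fun j => i < j), V2 i j * (r i + r j)) /
            (v0 + (∑ i ∈ C, V1 i) + ∑ i ∈ C, ∑ j ∈ C.filter (fun j => i < j), V2 i j)) :=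
          mul_div_assoc _ _ _
  have upper : ∀ C ⊆ Finset.Icc 1 n,
      R2 C ≤ (1 + x) * ((∑ i ∈ C, V1 i * r i) / (v0 + ∑ i ∈ C, V1 i)) := by
    intro C hC
    rw [hR2]
    have hD := hDpos C hC
    have hQ := hQnn C
    have hDQ : 0 < v0 + (∑ i ∈ C, V1 i) + ∑ i ∈ C, ∑ j ∈ C.filter (fun j => i < j), V2 i j := by
      linarith
    have h1 := hPle C hC
    have h3 := hS1nn C hC
    calc ((∑ i ∈ C, V1 i * r i)
              + ∑ i ∈ C, ∑ j ∈ C.filter (fun j => i < j), V2 i j * (r i + r j)) /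
            (v0 + (∑ i ∈ C, V1 i) + ∑ i ∈ C, ∑ j ∈ C.filter (fun j => i < j), V2 i j)
        ≤ ((1 + x) * ∑ i ∈ C, V1 i * r i) / (v0 + ∑ i ∈ C, V1 i) := by
          rw [div_le_div_iff₀ hDQ hD]
          nlinarith [mul_le_mul_of_nonneg_right h1 hD.le,
            mul_nonneg (mul_nonneg (by linarith : (0:ℝ) ≤ 1 + x) h3) hQ]
      _ = (1 + x) * ((∑ i ∈ C, V1 i * r i) / (v0 + ∑ i ∈ C, V1 i)) := mul_div_assoc _ _ _
  -- R2 Cs ≥ 0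
  have hR2empty : R2 ∅ = 0 := by rw [hR2]; simp
  have hCsnn : 0 ≤ R2 Cs := by
    rw [← hR2empty]; exact hCsmax ∅ (Finset.empty_subset _)
  -- chain
  obtain ⟨m, hm1, hmn, hle⟩ := mnl_prefix hn hv0 hr hsort hV1 hCs
  have hIccsub : Finset.Icc 1 m ⊆ Finset.Icc 1 n := by
    intro i hi; simp only [Finset.mem_Icc] at hi ⊢; omega
  have hchain : R2 Cs ≤ (1 + x) * ((1 + x / 2) * R2 Crev) := by
    have c1 := upper Cs hCs
    have c2 : (∑ i ∈ Finset.Icc 1 m, V1 i * r i) / (v0 + ∑ i ∈ Finset.Icc 1 m, V1 i)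
        ≤ (1 + x / 2) * R2 Crev := by
      have := lower (Finset.Icc 1 m) hIccsub
      have hc := hCrevmax m hm1 hmn
      nlinarith
    have : (1 + x) * ((∑ i ∈ Cs, V1 i * r i) / (v0 + ∑ i ∈ Cs, V1 i))
        ≤ (1 + x) * ((1 + x / 2) * R2 Crev) := by
      have h01 : (0:ℝ) ≤ 1 + x := by linarith
      exact mul_le_mul_of_nonneg_left (hle.trans c2) h01
    linarith
  -- final arithmetic
  have hcrevnn : 0 ≤ R2 Crev := by
    by_contra h
    push_neg at h
    nlinarith [mul_pos (by linarith : (0:ℝ) < 1 + x)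
      (mul_pos (by linarith : (0:ℝ) < 1 + x / 2) (neg_pos.mpr h))]
  have h24 : (2:ℝ) + 4 * ε * n = 2 + 4 * x := by rw [hx]; ring
  have h2x : (2:ℝ) - ε * n = 2 - x := by rw [hx]
  rw [ge_iff_le, h24, h2x, div_mul_eq_mul_div, div_le_iff₀ (by linarith : (0:ℝ) < 2 + 4 * x)]
  have hK : (2 - x) * ((1 + x) * (1 + x / 2)) ≤ 2 + 4 * x := by
    nlinarith [mul_nonneg hxnn hxnn, mul_nonneg (mul_nonneg hxnn hxnn) hxnn]
  have h1 : (2 - x) * R2 Cs ≤ (2 - x) * ((1 + x) * ((1 + x / 2) * R2 Crev)) :=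
    mul_le_mul_of_nonneg_left hchain (by linarith)
  have h2 : (2 - x) * ((1 + x) * ((1 + x / 2) * R2 Crev))
      = ((2 - x) * ((1 + x) * (1 + x / 2))) * R2 Crev := by ring
  have h3 : ((2 - x) * ((1 + x) * (1 + x / 2))) * R2 Crev ≤ (2 + 4 * x) * R2 Crev :=
    mul_le_mul_of_nonneg_right hK hcrevnn
  nlinarith [h1, h2, h3]
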